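/- Suppose f ∈ C²(ℝ^d) with ‖∇²f(x)‖ ≤ M for all x, and 0 < α < 1/M. Let x* = 0 be a strict saddle point of f with f(0) = 0 and all eigenvalues of ∇²f(0) nonzero. Let U₁ be a neighborhood of 0 and σ > 0 be such that ‖∇f(x)‖ ≥ σ‖x‖ for all x ∈ U₁, let ρ ∈ (0,1) satisfy ρM + Mρ²/2 < (ασ²/(2d))(1−ρ)², set U₂ := ⋃_{x : f(x)=0} B(x, ρ‖x‖) (open Euclidean balls) and S := U₁ ∩ U₂ ∩ f⁻¹([0,∞)). Then the set Θ₂ := {(x₀, ω) ∈ Θ : x_t(ω) ∈ S for only finitely many t} satisfies μ(Θ \ Θ₂) = 0. -/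

import Mathlib

open MeasureTheory Filter Topology

noncomputable section

/-- Iterates of randomized coordinate gradient descent with step size `α`:
`x_{t+1} = x_t - α e_{i_t} ∂_{i_t} f(x_t)`. -/
def rcgdIter (d : ℕ) (f : EuclideanSpace ℝ (Fin d) → ℝ) (α : ℝ)
    (x₀ : EuclideanSpace ℝ (Fin d)) (ω : ℕ → Fin d) : ℕ → EuclideanSpace ℝ (Fin d)
  | 0 => x₀
  | t + 1 =>
      rcgdIter d f α x₀ ω t -
        (α * gradient f (rcgdIter d f α x₀ ω t) (ω t)) • EuclideanSpace.single (ω t) (1 : ℝ)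

/-- The Hessian `∇²f(x)` of `f` at `x`, as a continuous linear map. -/
def hess (d : ℕ) (f : EuclideanSpace ℝ (Fin d) → ℝ) (x : EuclideanSpace ℝ (Fin d)) :
    EuclideanSpace ℝ (Fin d) →L[ℝ] EuclideanSpace ℝ (Fin d) :=
  fderiv ℝ (gradient f) x

/-!
A step along a coordinate of largest partial derivative lowers `f` by at least
`α ‖∇f‖² / (2d) ≥ α σ² ‖x‖² / (2d)`, while the second-order Taylor bound at a nearby zero `y` of
`f` gives `f x ≤ (ρM + Mρ²/2) ‖x‖² / (1 - ρ)²`; the choice of `ρ` makes the decrease win, so such a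
step from the trap region lands where `f < 0`, and as `f` never increases along the iterates the
region is never visited again. Given the past, that coordinate is drawn with probability `1/d`, so
at least `k` visits have probability at most `(1 - 1/d)^k`; integrating over `x₀` finishes.
-/

open InnerProductSpace Set
open scoped NNReal ENNReal

section QuadraticBound

variable {E : Type*} [NormedAddCommGroup E] [InnerProductSpace ℝ E] [CompleteSpace E]
  {f : E → ℝ} {K : ℝ≥0}

theorem measurable_gradient [MeasurableSpace E] [BorelSpace E] : Measurable (gradient f) :=
  (toDual ℝ E).symm.continuous.measurable.comp (measurable_fderiv ℝ f)

theorem ContDiff.contDiff_gradient {n : WithTop ℕ∞} (hf : ContDiff ℝ (n + 1) f) :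
    ContDiff ℝ n (gradient f) :=
  (toDual ℝ E).symm.toContinuousLinearEquiv.contDiff.comp (hf.fderiv_right le_rfl)

theorem lipschitzWith_gradient_of_norm_fderiv_le (hf : ContDiff ℝ 2 f) {M : ℝ}
    (hM : ∀ x, ‖fderiv ℝ (gradient f) x‖ ≤ M) : LipschitzWith M.toNNReal (gradient f) :=
  lipschitzWith_of_nnnorm_fderiv_le ((hf.contDiff_gradient (n := 1)).differentiable one_ne_zero)
    fun x => by rw [← NNReal.coe_le_coe, coe_nnnorm]; exact (hM x).trans (Real.le_coe_toNNReal M)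

theorem abs_sub_sub_inner_gradient_le (hf : Differentiable ℝ f)
    (hK : LipschitzWith K (gradient f)) (x v : E) :
    |f (x + v) - f x - ⟪gradient f x, v⟫_ℝ| ≤ K / 2 * ‖v‖ ^ 2 := by
  let g : ℝ → ℝ := fun t => f (x + t • v) - f x - t * ⟪gradient f x, v⟫_ℝ
  have hg : ∀ t, HasDerivAt g ⟪gradient f (x + t • v) - gradient f x, v⟫_ℝ t := by
    intro t
    have hline : HasDerivAt (fun t : ℝ => x + t • v) v t := by
      simpa using ((hasDerivAt_id t).smul_const v).const_add x
    refine ((((hf _).hasFDerivAt.comp_hasDerivAt t hline).sub_const (f x)).sub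
      ((hasDerivAt_id t).mul_const ⟪gradient f x, v⟫_ℝ)).congr_deriv ?_
    simp [inner_sub_left, inner_gradient_left]
  have hB : ∀ t : ℝ, HasDerivAt (fun t : ℝ => K / 2 * t ^ 2 * ‖v‖ ^ 2) (K * t * ‖v‖ ^ 2) t := by
    intro t
    refine (((hasDerivAt_pow 2 t).const_mul ((K : ℝ) / 2)).mul_const (‖v‖ ^ 2)).congr_deriv ?_
    ring
  have hbound : ∀ t ∈ Ico (0 : ℝ) 1,
      ‖⟪gradient f (x + t • v) - gradient f x, v⟫_ℝ‖ ≤ K * t * ‖v‖ ^ 2 := by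
    intro t ht
    calc ‖⟪gradient f (x + t • v) - gradient f x, v⟫_ℝ‖
        ≤ ‖gradient f (x + t • v) - gradient f x‖ * ‖v‖ := norm_inner_le_norm _ _
      _ ≤ K * ‖t • v‖ * ‖v‖ := by
          gcongr; simpa using hK.norm_sub_le (x + t • v) x
      _ = K * t * ‖v‖ ^ 2 := by rw [norm_smul, Real.norm_of_nonneg ht.1]; ring
  have := image_norm_le_of_norm_deriv_right_le_deriv_boundary
    (fun t _ => (hg t).continuousAt.continuousWithinAt) (fun t _ => (hg t).hasDerivWithinAt)
    (by simp [g]) hB hbound (right_mem_Icc.2 zero_le_one)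
  simpa [g] using this

theorem apply_mul_one_sub_sq_le_of_norm_sub_lt (hf : Differentiable ℝ f)
    (hK : LipschitzWith K (gradient f)) (h0 : gradient f 0 = 0) {ρ : ℝ} (hρ : ρ < 1)
    {x y : E} (hy : f y = 0) (hxy : ‖x - y‖ < ρ * ‖y‖) :
    f x * (1 - ρ) ^ 2 ≤ (ρ * K + K * ρ ^ 2 / 2) * ‖x‖ ^ 2 := by
  set a := ‖x‖
  set r := ‖x - y‖
  have hρ0 : 0 ≤ ρ := by nlinarith [norm_nonneg y, norm_nonneg (x - y)]
  have hgrad : ‖gradient f x‖ ≤ K * a := by simpa [h0] using hK.norm_sub_le x 0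
  have hinner : -⟪gradient f x, y - x⟫_ℝ ≤ K * a * r := by
    calc -⟪gradient f x, y - x⟫_ℝ ≤ ‖gradient f x‖ * ‖y - x‖ :=
          (neg_le_abs _).trans (abs_real_inner_le_norm _ _)
      _ ≤ K * a * r := by rw [norm_sub_rev]; gcongr
  have htaylor := (abs_le.1 (abs_sub_sub_inner_gradient_le hf hK x (y - x))).1
  rw [add_sub_cancel, hy, norm_sub_rev] at htaylor
  have hfx : f x ≤ K * a * r + K / 2 * r ^ 2 := by linarith
  have hr : r * (1 - ρ) ≤ ρ * a := by
    have : ‖y‖ ≤ a + r := norm_le_norm_add_norm_sub' y x |>.trans_eq (by rw [norm_sub_rev])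
    nlinarith
  calc f x * (1 - ρ) ^ 2 ≤ (K * a * r + K / 2 * r ^ 2) * (1 - ρ) ^ 2 := by gcongr
    _ = K * a * (r * (1 - ρ)) * (1 - ρ) + K / 2 * (r * (1 - ρ)) ^ 2 := by ring
    _ ≤ K * a * (ρ * a) * 1 + K / 2 * (ρ * a) ^ 2 := by
        have : 0 ≤ r * (1 - ρ) := mul_nonneg (norm_nonneg _) (by linarith)
        gcongr; linarith
    _ = (ρ * K + K * ρ ^ 2 / 2) * a ^ 2 := by ring

def trapRegion (f : E → ℝ) (σ ρ : ℝ) : Set E :=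
  {x | σ * ‖x‖ ≤ ‖gradient f x‖} ∩ (⋃ y ∈ {y | f y = 0}, Metric.ball y (ρ * ‖y‖)) ∩
    f ⁻¹' Ici 0

theorem measurableSet_trapRegion [MeasurableSpace E] [BorelSpace E] (hf : Measurable f)
    (σ ρ : ℝ) : MeasurableSet (trapRegion f σ ρ) :=
  ((measurableSet_le (by fun_prop) measurable_gradient.norm).inter
    (isOpen_biUnion fun _ _ => Metric.isOpen_ball).measurableSet).inter
    (hf measurableSet_Ici)

end QuadraticBound

section CoordinateDescent

variable {ι : Type*} [Fintype ι] [DecidableEq ι] {f : EuclideanSpace ℝ ι → ℝ} {K : ℝ≥0}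
  {α : ℝ}

def coordGradStep (f : EuclideanSpace ℝ ι → ℝ) (α : ℝ) (i : ι) (x : EuclideanSpace ℝ ι) :
    EuclideanSpace ℝ ι :=
  x - (α * gradient f x i) • EuclideanSpace.single i 1

theorem apply_coordGradStep_le (hf : Differentiable ℝ f) (hK : LipschitzWith K (gradient f))
    (hα : 0 ≤ α) (hαK : α * K ≤ 1) (i : ι) (x : EuclideanSpace ℝ ι) :
    f (coordGradStep f α i x) ≤ f x - α / 2 * gradient f x i ^ 2 := by
  have h := (abs_le.1 (abs_sub_sub_inner_gradient_le hf hK x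
    (-((α * gradient f x i) • EuclideanSpace.single i 1)))).2
  rw [← sub_eq_add_neg, inner_neg_right, inner_smul_right, EuclideanSpace.inner_single_right,
    norm_neg, norm_smul, PiLp.norm_single, norm_one, mul_one, Real.norm_eq_abs, sq_abs] at h
  simp only [conj_trivial] at h
  unfold coordGradStep
  nlinarith [mul_le_mul_of_nonneg_right hαK (mul_nonneg hα (sq_nonneg (gradient f x i)))]

omit [DecidableEq ι] in
theorem norm_sq_le_card_mul_sq_of_forall_sq_le {v : EuclideanSpace ℝ ι} {i : ι}
    (hi : ∀ j, v j ^ 2 ≤ v i ^ 2) : ‖v‖ ^ 2 ≤ Fintype.card ι * v i ^ 2 := by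
  rw [EuclideanSpace.real_norm_sq_eq]
  exact (Finset.sum_le_card_nsmul _ _ _ fun j _ => hi j).trans_eq (by simp)

theorem apply_coordGradStep_neg (hf : Differentiable ℝ f) (hK : LipschitzWith K (gradient f))
    (h0 : gradient f 0 = 0) (hα : 0 ≤ α) (hαK : α * K ≤ 1) {σ ρ : ℝ} (hσ : 0 ≤ σ) (hρ1 : ρ < 1)
    (hρ : ρ * K + K * ρ ^ 2 / 2 < α * σ ^ 2 / (2 * Fintype.card ι) * (1 - ρ) ^ 2)
    {x : EuclideanSpace ℝ ι} (hx : x ∈ trapRegion f σ ρ) {i : ι}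
    (hi : ∀ j, gradient f x j ^ 2 ≤ gradient f x i ^ 2) :
    f (coordGradStep f α i x) < 0 := by
  obtain ⟨⟨hσx, hball⟩, -⟩ := hx
  obtain ⟨y, hy, hxy⟩ : ∃ y, f y = 0 ∧ ‖x - y‖ < ρ * ‖y‖ := by
    simpa [dist_eq_norm] using hball
  have hx0 : 0 < ‖x‖ := by
    refine (norm_nonneg x).lt_of_ne' fun hx => ?_
    rw [norm_eq_zero.1 hx, zero_sub, norm_neg] at hxy
    nlinarith [norm_nonneg y]
  have hcard : (0 : ℝ) < Fintype.card ι := by exact_mod_cast Fintype.card_pos_iff.2 ⟨i⟩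
  set R := α * σ ^ 2 / (2 * Fintype.card ι)
  have hfx : f x < R * ‖x‖ ^ 2 := by
    refine lt_of_mul_lt_mul_right (?_ : f x * (1 - ρ) ^ 2 < R * ‖x‖ ^ 2 * (1 - ρ) ^ 2)
      (sq_nonneg _)
    calc f x * (1 - ρ) ^ 2 ≤ (ρ * K + K * ρ ^ 2 / 2) * ‖x‖ ^ 2 :=
          apply_mul_one_sub_sq_le_of_norm_sub_lt hf hK h0 hρ1 hy hxy
      _ < R * (1 - ρ) ^ 2 * ‖x‖ ^ 2 := mul_lt_mul_of_pos_right hρ (by positivity)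
      _ = R * ‖x‖ ^ 2 * (1 - ρ) ^ 2 := by ring
  have hcoord : σ ^ 2 * ‖x‖ ^ 2 ≤ Fintype.card ι * gradient f x i ^ 2 :=
    calc σ ^ 2 * ‖x‖ ^ 2 = (σ * ‖x‖) ^ 2 := by ring
      _ ≤ ‖gradient f x‖ ^ 2 := pow_le_pow_left₀ (by positivity) hσx 2
      _ ≤ Fintype.card ι * gradient f x i ^ 2 := norm_sq_le_card_mul_sq_of_forall_sq_le hi
  have hR : R * ‖x‖ ^ 2 ≤ α / 2 * gradient f x i ^ 2 := by
    rw [div_mul_eq_mul_div, div_le_iff₀ (by positivity)]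
    nlinarith [mul_le_mul_of_nonneg_left hcoord hα]
  linarith [apply_coordGradStep_le hf hK hα hαK i x]

end CoordinateDescent

section UniformSequences

variable {D : Type*}

def initSeg (n : ℕ) (ω : ℕ → D) : Fin n → D := fun k => ω k

theorem initSeg_preimage_image {n : ℕ} {A : Set (ℕ → D)} (hA : DependsOn (· ∈ A) (Iio n)) :
    initSeg n ⁻¹' (initSeg n '' A) = A := by
  refine (subset_preimage_image _ _).antisymm' ?_
  rintro ω ⟨ω', hω', hinit⟩
  exact (hA fun s hs => congrFun hinit ⟨s, hs⟩).mp hω'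

variable [MeasurableSpace D]

theorem measurable_initSeg (n : ℕ) : Measurable (initSeg (D := D) n) :=
  measurable_pi_lambda _ fun k => measurable_pi_apply (k : ℕ)

variable [Fintype D]

def IsUniformOnCylinders (ℙ : Measure (ℕ → D)) : Prop :=
  ∀ (n : ℕ) (js : Fin n → D),
    ℙ {ω | ∀ k : Fin n, ω k = js k} = (1 / (Fintype.card D : ℝ≥0∞)) ^ n

variable {ℙ : Measure (ℕ → D)}

theorem IsUniformOnCylinders.isProbabilityMeasure (hℙ : IsUniformOnCylinders ℙ) :
    IsProbabilityMeasure ℙ :=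
  ⟨by simpa using hℙ 0 Fin.elim0⟩

variable [MeasurableSingletonClass D]

theorem measurableSet_of_dependsOn {n : ℕ} {A : Set (ℕ → D)} (hA : DependsOn (· ∈ A) (Iio n)) :
    MeasurableSet A :=
  initSeg_preimage_image hA ▸ measurable_initSeg n (toFinite _).measurableSet

theorem IsUniformOnCylinders.measure_initSeg_preimage (hℙ : IsUniformOnCylinders ℙ) {n : ℕ}
    (A : Set (Fin n → D)) :
    ℙ (initSeg n ⁻¹' A) = A.ncard * (1 / (Fintype.card D : ℝ≥0∞)) ^ n := by
  obtain ⟨s, rfl⟩ := A.toFinite.exists_finset_coe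
  have hfiber : ∀ p : Fin n → D, initSeg n ⁻¹' {p} = {ω | ∀ k : Fin n, ω k = p k} := fun p => by
    ext ω; simp [initSeg, funext_iff]
  rw [← sum_measure_preimage_singleton s fun p _ =>
    measurable_initSeg n (measurableSet_singleton p)]
  simp only [hfiber, hℙ n, Finset.sum_const, nsmul_eq_mul, ncard_coe_finset]

theorem IsUniformOnCylinders.measure_diff_setOf_eq_le (hℙ : IsUniformOnCylinders ℙ) {n : ℕ}
    {A : Set (ℕ → D)} (hA : DependsOn (· ∈ A) (Iio n)) {g : (ℕ → D) → D}
    (hg : DependsOn g (Iio n)) :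
    ℙ (A \ {ω | ω n = g ω}) ≤ (1 - 1 / (Fintype.card D : ℝ≥0∞)) * ℙ A := by
  have := hℙ.isProbabilityMeasure
  set ε : ℝ≥0∞ := 1 / (Fintype.card D : ℝ≥0∞)
  set F := {ω : ℕ → D | ω n = g ω}
  have hF : DependsOn (· ∈ F) (Iio (n + 1)) := fun ω ω' h => by
    change (ω n = g ω) = (ω' n = g ω')
    rw [h n (Nat.lt_succ_self n), hg fun s hs => h s (hs.trans (Nat.lt_succ_self n))]
  have hAF : DependsOn (· ∈ A ∩ F) (Iio (n + 1)) := fun ω ω' h => by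
    simp only [mem_inter_iff, hF h, hA fun s hs => h s (hs.trans (Nat.lt_succ_self n))]
  -- Redefining `ω n := g ω` keeps `ω` in `A` and puts it in `F`.
  have hsurj : initSeg n '' A ⊆ Fin.init '' (initSeg (n + 1) '' (A ∩ F)) := by
    rintro _ ⟨ω, hω, rfl⟩
    set ω' := Function.update ω n (g ω)
    have hagree : ∀ s ∈ Iio n, ω' s = ω s := fun s hs => Function.update_of_ne hs.ne _ _
    refine ⟨initSeg (n + 1) ω', ⟨ω', ⟨(hA hagree).mpr hω, ?_⟩, rfl⟩, ?_⟩
    · simp [F, ω', hg hagree]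
    · funext k; exact hagree k k.isLt
  have hcount : ε * ℙ A ≤ ℙ (A ∩ F) := by
    have hA' := hℙ.measure_initSeg_preimage (initSeg n '' A)
    have hAF' := hℙ.measure_initSeg_preimage (initSeg (n + 1) '' (A ∩ F))
    rw [initSeg_preimage_image hA] at hA'
    rw [initSeg_preimage_image hAF] at hAF'
    calc ε * ℙ A = (initSeg n '' A).ncard * ε ^ (n + 1) := by rw [hA', pow_succ]; ring
      _ ≤ (initSeg (n + 1) '' (A ∩ F)).ncard * ε ^ (n + 1) := by
          gcongr; exact (ncard_le_ncard hsurj).trans ncard_image_le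
      _ = ℙ (A ∩ F) := hAF'.symm
  have hsplit := measure_inter_add_sdiff (μ := ℙ) A (measurableSet_of_dependsOn hF)
  calc ℙ (A \ F) = ℙ A - ℙ (A ∩ F) :=
        ENNReal.eq_sub_of_add_eq (measure_ne_top _ _) ((add_comm _ _).trans hsplit)
    _ ≤ ℙ A - ε * ℙ A := tsub_le_tsub_left hcount _
    _ = (1 - ε) * ℙ A := by rw [ENNReal.sub_mul fun _ _ => measure_ne_top _ _, one_mul]

end UniformSequences

section Visits

variable {Ω : Type*} (P : ℕ → Ω → Prop)

open scoped Classical in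
/-- The `k`-th visit of `P · ω`, counting from `0`, happens at time `t`. -/
def nthVisit (k t : ℕ) : Set Ω := {ω | P t ω ∧ Nat.count (P · ω) t = k}

variable {P}

theorem pairwise_disjoint_nthVisit (k : ℕ) :
    Pairwise (Function.onFun Disjoint (nthVisit P k)) := by
  classical
  exact fun _ _ hne => Set.disjoint_left.2 fun _ h h' =>
    hne (Nat.count_injective h.1 h'.1 (h.2.trans h'.2.symm))

theorem setOf_infinite_subset_iUnion_nthVisit (k : ℕ) :
    {ω | {t | P t ω}.Infinite} ⊆ ⋃ t, nthVisit P k t := by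
  classical
  intro ω hω
  exact mem_iUnion.2 ⟨Nat.nth (P · ω) k, Nat.nth_mem_of_infinite hω k,
    by convert Nat.count_nth_of_infinite hω k⟩

theorem iUnion_nthVisit_succ_subset {Q : ℕ → Ω → Prop}
    (htrap : ∀ t ω, P t ω → Q t ω → ∀ s, t < s → ¬ P s ω) (k : ℕ) :
    ⋃ t, nthVisit P (k + 1) t ⊆ ⋃ t, nthVisit P k t \ {ω | Q t ω} := by
  classical
  simp only [subset_def, mem_iUnion]
  rintro ω ⟨t', hPt', hcount⟩
  have hk : ∀ hf : (Set.ofPred (P · ω)).Finite, k < hf.toFinset.card := fun hf =>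
    by have := Nat.count_le_card hf t'; omega
  have hlt : Nat.nth (P · ω) k < t' := Nat.nth_lt_of_lt_count (by convert k.lt_succ_self)
  refine ⟨Nat.nth (P · ω) k, ⟨Nat.nth_mem k hk, by convert Nat.count_nth hk⟩, ?_⟩
  exact fun hQ => htrap _ ω (Nat.nth_mem k hk) hQ t' hlt hPt'

theorem dependsOn_nthVisit {D : Type*} {P : ℕ → (ℕ → D) → Prop}
    (hP : ∀ t, DependsOn (P t) (Iio t)) (k t : ℕ) :
    DependsOn (· ∈ nthVisit P k t) (Iio t) := by
  classical
  intro ω ω' h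
  have hcount : Nat.count (P · ω) t = Nat.count (P · ω') t := by
    simp only [Nat.count_eq_card_filter_range]
    refine congrArg Finset.card (Finset.filter_congr fun s hs => ?_)
    exact iff_of_eq (hP s fun i hi => h i (hi.trans (Finset.mem_range.1 hs)))
  simp only [nthVisit, mem_ofPred_eq, hP t h, hcount]

end Visits

section Escape

variable {D : Type*} [Fintype D] [MeasurableSpace D] [MeasurableSingletonClass D]
  {ℙ : Measure (ℕ → D)}

theorem IsUniformOnCylinders.measure_setOf_infinite_eq_zero (hℙ : IsUniformOnCylinders ℙ)
    {P : ℕ → (ℕ → D) → Prop} {g : ℕ → (ℕ → D) → D} (hP : ∀ t, DependsOn (P t) (Iio t))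
    (hg : ∀ t, DependsOn (g t) (Iio t))
    (htrap : ∀ t ω, P t ω → ω t = g t ω → ∀ s, t < s → ¬ P s ω) :
    ℙ {ω | {t | P t ω}.Infinite} = 0 := by
  have := hℙ.isProbabilityMeasure
  set r : ℝ≥0∞ := 1 - 1 / (Fintype.card D : ℝ≥0∞)
  have hr : r < 1 := ENNReal.sub_lt_self ENNReal.one_ne_top one_ne_zero (by simp)
  have hstep (k : ℕ) : ℙ (⋃ t, nthVisit P (k + 1) t) ≤ r * ℙ (⋃ t, nthVisit P k t) :=
    calc ℙ (⋃ t, nthVisit P (k + 1) t)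
        ≤ ℙ (⋃ t, nthVisit P k t \ {ω | ω t = g t ω}) :=
          measure_mono (iUnion_nthVisit_succ_subset htrap k)
      _ ≤ ∑' t, ℙ (nthVisit P k t \ {ω | ω t = g t ω}) := measure_iUnion_le _
      _ ≤ ∑' t, r * ℙ (nthVisit P k t) := ENNReal.tsum_le_tsum fun t =>
          hℙ.measure_diff_setOf_eq_le (dependsOn_nthVisit hP k t) (hg t)
      _ = r * ℙ (⋃ t, nthVisit P k t) := by
          rw [ENNReal.tsum_mul_left, measure_iUnion (pairwise_disjoint_nthVisit k)
            fun t => measurableSet_of_dependsOn (dependsOn_nthVisit hP k t)]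
  have hbound (k : ℕ) : ℙ (⋃ t, nthVisit P k t) ≤ r ^ k := by
    induction k with
    | zero => simpa using prob_le_one
    | succ k ih => exact (hstep k).trans (by rw [pow_succ']; gcongr)
  exact le_antisymm (ge_of_tendsto' (ENNReal.tendsto_pow_atTop_nhds_zero_of_lt_one hr) fun k =>
    (measure_mono (setOf_infinite_subset_iUnion_nthVisit k)).trans (hbound k)) zero_le

end Escape

section RandomizedCoordinateDescent

variable {d : ℕ} {f : EuclideanSpace ℝ (Fin d) → ℝ} {α : ℝ}

theorem rcgdIter_succ (x₀ : EuclideanSpace ℝ (Fin d)) (ω : ℕ → Fin d) (t : ℕ) :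
    rcgdIter d f α x₀ ω (t + 1) = coordGradStep f α (ω t) (rcgdIter d f α x₀ ω t) :=
  rfl

theorem dependsOn_rcgdIter (x₀ : EuclideanSpace ℝ (Fin d)) (t : ℕ) :
    DependsOn (fun ω => rcgdIter d f α x₀ ω t) (Iio t) := by
  induction t with
  | zero => exact fun _ _ _ => rfl
  | succ t ih =>
    intro ω ω' h
    simp only [rcgdIter_succ, ih fun s hs => h s (hs.trans (Nat.lt_succ_self t)),
      h t (Nat.lt_succ_self t)]

theorem measurable_rcgdIter (t : ℕ) :
    Measurable fun p : EuclideanSpace ℝ (Fin d) × (ℕ → Fin d) => rcgdIter d f α p.1 p.2 t := by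
  have hstep : Measurable fun q : EuclideanSpace ℝ (Fin d) × Fin d => coordGradStep f α q.2 q.1 :=
    measurable_from_prod_countable_left fun i => by
      change Measurable (coordGradStep f α i)
      have hgrad_i : Measurable fun x : EuclideanSpace ℝ (Fin d) => gradient f x i :=
        (PiLp.continuous_apply 2 _ i).measurable.comp measurable_gradient
      exact measurable_id.sub ((hgrad_i.const_mul α).smul_const _)
  induction t with
  | zero => exact measurable_fst
  | succ t ih => exact hstep.comp (ih.prodMk ((measurable_pi_apply t).comp measurable_snd))

variable {K : ℝ≥0}

theorem antitone_apply_rcgdIter (hf : Differentiable ℝ f) (hK : LipschitzWith K (gradient f))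
    (hα : 0 ≤ α) (hαK : α * K ≤ 1) (x₀ : EuclideanSpace ℝ (Fin d)) (ω : ℕ → Fin d) :
    Antitone fun t => f (rcgdIter d f α x₀ ω t) :=
  antitone_nat_of_succ_le fun t =>
    (apply_coordGradStep_le hf hK hα hαK _ _).trans (sub_le_self _ (by positivity))

theorem rcgdIter_notMem_trapRegion (hf : Differentiable ℝ f) (hK : LipschitzWith K (gradient f))
    (h0 : gradient f 0 = 0) (hα : 0 ≤ α) (hαK : α * K ≤ 1) {σ ρ : ℝ} (hσ : 0 ≤ σ) (hρ1 : ρ < 1)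
    (hρ : ρ * K + K * ρ ^ 2 / 2 < α * σ ^ 2 / (2 * d) * (1 - ρ) ^ 2)
    {x₀ : EuclideanSpace ℝ (Fin d)} {ω : ℕ → Fin d} {t : ℕ}
    (ht : rcgdIter d f α x₀ ω t ∈ trapRegion f σ ρ)
    (hi : ∀ j, gradient f (rcgdIter d f α x₀ ω t) j ^ 2 ≤
      gradient f (rcgdIter d f α x₀ ω t) (ω t) ^ 2)
    {s : ℕ} (hts : t < s) : rcgdIter d f α x₀ ω s ∉ trapRegion f σ ρ := fun hs => by
  have hneg : f (rcgdIter d f α x₀ ω (t + 1)) < 0 :=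
    apply_coordGradStep_neg hf hK h0 hα hαK hσ hρ1 (by rwa [Fintype.card_fin]) ht hi
  have hdecr := antitone_apply_rcgdIter hf hK hα hαK x₀ ω hts
  exact (hdecr.trans_lt hneg).not_ge hs.2

variable {ℙ : Measure (ℕ → Fin d)} [NeZero d]

theorem measure_infinite_visits_trapRegion_eq_zero (hf : Differentiable ℝ f)
    (hK : LipschitzWith K (gradient f)) (h0 : gradient f 0 = 0) (hα : 0 ≤ α) (hαK : α * K ≤ 1)
    {σ ρ : ℝ} (hσ : 0 ≤ σ) (hρ1 : ρ < 1)
    (hρ : ρ * K + K * ρ ^ 2 / 2 < α * σ ^ 2 / (2 * d) * (1 - ρ) ^ 2)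
    (hℙ : IsUniformOnCylinders ℙ) (x₀ : EuclideanSpace ℝ (Fin d)) :
    ℙ {ω | {t | rcgdIter d f α x₀ ω t ∈ trapRegion f σ ρ}.Infinite} = 0 := by
  choose best hbest using fun x : EuclideanSpace ℝ (Fin d) =>
    Finite.exists_max fun j => gradient f x j ^ 2
  exact hℙ.measure_setOf_infinite_eq_zero (g := fun t ω => best (rcgdIter d f α x₀ ω t))
    (fun t _ _ h => congrArg (· ∈ trapRegion f σ ρ) (dependsOn_rcgdIter x₀ t h))
    (fun t _ _ h => congrArg best (dependsOn_rcgdIter x₀ t h))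
    fun t ω ht hω s hts =>
      rcgdIter_notMem_trapRegion hf hK h0 hα hαK hσ hρ1 hρ ht (hω ▸ hbest _) hts

theorem volume_prod_infinite_visits_trapRegion_eq_zero (hf : Differentiable ℝ f)
    (hK : LipschitzWith K (gradient f)) (h0 : gradient f 0 = 0) (hα : 0 ≤ α) (hαK : α * K ≤ 1)
    {σ ρ : ℝ} (hσ : 0 ≤ σ) (hρ1 : ρ < 1)
    (hρ : ρ * K + K * ρ ^ 2 / 2 < α * σ ^ 2 / (2 * d) * (1 - ρ) ^ 2)
    (hℙ : IsUniformOnCylinders ℙ) :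
    (volume.prod ℙ) {p : EuclideanSpace ℝ (Fin d) × (ℕ → Fin d) |
      {t | rcgdIter d f α p.1 p.2 t ∈ trapRegion f σ ρ}.Infinite} = 0 := by
  have := hℙ.isProbabilityMeasure
  have hmeas : MeasurableSet {p : EuclideanSpace ℝ (Fin d) × (ℕ → Fin d) |
      {t | rcgdIter d f α p.1 p.2 t ∈ trapRegion f σ ρ}.Infinite} :=
    MeasurableSet.setOfPred_infinite.preimage (measurable_set_iff.2 fun t =>
      measurableSet_setOfPred.1 (measurable_rcgdIter t
        (measurableSet_trapRegion hf.continuous.measurable σ ρ)))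
  exact (Measure.measure_prod_null hmeas).2 (Eventually.of_forall
    (measure_infinite_visits_trapRegion_eq_zero hf hK h0 hα hαK hσ hρ1 hρ hℙ))

end RandomizedCoordinateDescent

theorem rcgd_visits_trap_finitely_often_general
    {d : ℕ} (hd : 1 ≤ d) (f : EuclideanSpace ℝ (Fin d) → ℝ) (M α : ℝ)
    (hf : ContDiff ℝ 2 f)
    (hM : ∀ x, ‖hess d f x‖ ≤ M)
    (hα : 0 < α) (hα' : α < 1 / M)
    (hcrit : gradient f 0 = 0)
    (U₁ : Set (EuclideanSpace ℝ (Fin d)))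
    (σ : ℝ) (hσ : 0 < σ)
    (hgrad : ∀ x ∈ U₁, σ * ‖x‖ ≤ ‖gradient f x‖)
    (ρ : ℝ) (hρ1 : ρ < 1)
    (hρ : ρ * M + M * ρ ^ 2 / 2 < (α * σ ^ 2 / (2 * d)) * (1 - ρ) ^ 2)
    (S : Set (EuclideanSpace ℝ (Fin d)))
    (hS : S = U₁ ∩ (⋃ x ∈ {x : EuclideanSpace ℝ (Fin d) | f x = 0}, Metric.ball x (ρ * ‖x‖)) ∩
      f ⁻¹' Set.Ici (0 : ℝ))
    (ℙ : Measure (ℕ → Fin d))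
    (hℙ : ∀ (n : ℕ) (js : Fin n → Fin d),
      ℙ {ω | ∀ k : Fin n, ω (k : ℕ) = js k} = (1 / (d : ENNReal)) ^ n) :
    ((volume : Measure (EuclideanSpace ℝ (Fin d))).prod ℙ)
      {p : EuclideanSpace ℝ (Fin d) × (ℕ → Fin d) |
        ¬ {t : ℕ | rcgdIter d f α p.1 p.2 t ∈ S}.Finite} = 0 := by
  have hM0 : 0 < M := one_div_pos.1 (hα.trans hα')
  have hKM : (M.toNNReal : ℝ) = M := Real.coe_toNNReal M hM0.le
  have hK : LipschitzWith M.toNNReal (gradient f) := lipschitzWith_gradient_of_norm_fderiv_le hf hM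
  have hαK : α * M.toNNReal ≤ 1 := by rw [hKM]; exact ((lt_div_iff₀ hM0).1 hα').le
  have hℙ' : IsUniformOnCylinders ℙ := by simpa [IsUniformOnCylinders] using hℙ
  have : NeZero d := ⟨by omega⟩
  have hsub : S ⊆ trapRegion f σ ρ := hS ▸ fun x ⟨⟨h1, h2⟩, h3⟩ => ⟨⟨hgrad x h1, h2⟩, h3⟩
  refine measure_mono_null (fun p hp => ?_) (volume_prod_infinite_visits_trapRegion_eq_zero
    (hf.differentiable (by norm_num)) hK hcrit hα.le hαK hσ.le hρ1 (by rwa [hKM]) hℙ')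
  exact Set.Infinite.mono (fun t ht => hsub ht) hp

/-- For `μ = Leb × ℙ` almost every `(x₀, ω)`, the iterates visit the trap region
`S = U₁ ∩ U₂ ∩ f⁻¹([0,∞))` only finitely often, where
`U₂ = ⋃_{f(x) = 0} B(x, ρ‖x‖)`. -/
theorem rcgd_visits_trap_finitely_often
    {d : ℕ} (hd : 1 ≤ d) (f : EuclideanSpace ℝ (Fin d) → ℝ) (M α : ℝ)
    (hf : ContDiff ℝ 2 f)
    (hM : ∀ x, ‖hess d f x‖ ≤ M)
    (hα : 0 < α) (hα' : α < 1 / M)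
    (hcrit : gradient f 0 = 0) (hf0 : f 0 = 0)
    (hneg : ∃ μ < (0 : ℝ), Module.End.HasEigenvalue (hess d f 0).toLinearMap μ)
    (hnd : ∀ μ : ℝ, Module.End.HasEigenvalue (hess d f 0).toLinearMap μ → μ ≠ 0)
    (U₁ : Set (EuclideanSpace ℝ (Fin d))) (hU₁ : U₁ ∈ 𝓝 (0 : EuclideanSpace ℝ (Fin d)))
    (σ : ℝ) (hσ : 0 < σ)
    (hgrad : ∀ x ∈ U₁, σ * ‖x‖ ≤ ‖gradient f x‖)
    (ρ : ℝ) (hρ0 : 0 < ρ) (hρ1 : ρ < 1)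
    (hρ : ρ * M + M * ρ ^ 2 / 2 < (α * σ ^ 2 / (2 * d)) * (1 - ρ) ^ 2)
    (S : Set (EuclideanSpace ℝ (Fin d)))
    (hS : S = U₁ ∩ (⋃ x ∈ {x : EuclideanSpace ℝ (Fin d) | f x = 0}, Metric.ball x (ρ * ‖x‖)) ∩
      f ⁻¹' Set.Ici (0 : ℝ))
    (ℙ : Measure (ℕ → Fin d))
    (hℙ : ∀ (n : ℕ) (js : Fin n → Fin d),
      ℙ {ω | ∀ k : Fin n, ω (k : ℕ) = js k} = (1 / (d : ENNReal)) ^ n) :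
    ((volume : Measure (EuclideanSpace ℝ (Fin d))).prod ℙ)
      {p : EuclideanSpace ℝ (Fin d) × (ℕ → Fin d) |
        ¬ {t : ℕ | rcgdIter d f α p.1 p.2 t ∈ S}.Finite} = 0 :=
  rcgd_visits_trap_finitely_often_general hd f M α hf hM hα hα' hcrit U₁ σ hσ hgrad ρ hρ1 hρ S hS ℙ
    hℙ
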